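/- arXiv:2006.03404 — 4 statements merged into one kernel-verified Lean document; each statement's English description precedes it below -/
import Mathlib

section
/- Fix λ2 > 0 and nonnegative random variables S_1, S_2, and suppose L_2(s) = O(L_1(s)) as s → ∞, i.e. there exist constants C > 0 and s_0 such that L_2(s) ≤ C·L_1(s) for all s ≥ s_0. Then the correlation coefficient CC(λ1, λ2) of the two stationary AoIs in the two-source M/G/1/1 pushout server tends to 0 as λ1 → ∞. -/
open MeasureTheory ProbabilityTheory Filter

/-- Laplace transform `L_S(s) = E[exp(−s·S)]` of a random variable `S`. -/
noncomputable def laplaceRV {Ω : Type*} [MeasurableSpace Ω] (P : Measure Ω)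
    (S : Ω → ℝ) (s : ℝ) : ℝ :=
  ∫ ω, Real.exp (-s * S ω) ∂P

/-- `M_S(s) = E[S·exp(−s·S)] = −L_S'(s)`. -/
noncomputable def mLaplaceRV {Ω : Type*} [MeasurableSpace Ω] (P : Measure Ω)
    (S : Ω → ℝ) (s : ℝ) : ℝ :=
  ∫ ω, S ω * Real.exp (-s * S ω) ∂P

/-- Correlation coefficient of the two stationary AoIs in the two-source M/G/1/1
pushout server with arrival rates `l1, l2` and service-time variables `S1, S2`. -/
noncomputable def aoiCC {Ω : Type*} [MeasurableSpace Ω] (P : Measure Ω)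
    (S1 S2 : Ω → ℝ) (l1 l2 : ℝ) : ℝ :=
  -(l1 * l2 * (mLaplaceRV P S1 (l1 + l2) * laplaceRV P S2 (l1 + l2)
      + laplaceRV P S1 (l1 + l2) * mLaplaceRV P S2 (l1 + l2))) /
    ((l1 * laplaceRV P S1 (l1 + l2) + l2 * laplaceRV P S2 (l1 + l2)) *
      Real.sqrt ((1 - 2 * l1 * mLaplaceRV P S1 (l1 + l2)) *
        (1 - 2 * l2 * mLaplaceRV P S2 (l1 + l2))))

/-!
Since `t e^{-t} ≤ e^{-1}`, we have `s M_k(s) ≤ e^{-1}`; hence for `s = λ1 + λ2` both factors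
`1 − 2 λ_k M_k(s)` under the square root are at least `1 − 2/e > 0`, and `M_k(s) → 0`.
Bounding `L_2 ≤ C L_1` in the numerator and dropping `λ2 L_2` from the denominator leaves
`|CC| ≤ λ2 (C M_1(s) + M_2(s)) / (1 − 2/e)`, which tends to `0`.
-/

open Real

lemma mul_exp_neg_mul_le_exp_neg_one_div {s : ℝ} (hs : 0 < s) (t : ℝ) :
    t * exp (-s * t) ≤ exp (-1) / s := by
  rw [le_div_iff₀ hs, mul_right_comm, neg_mul]
  exact mul_exp_neg_le_exp_neg_one (t * s) |>.trans_eq' (by rw [mul_comm s t])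

section Laplace

variable {Ω : Type*} [MeasurableSpace Ω] {P : Measure Ω} {S : Ω → ℝ} {s : ℝ}

lemma integrable_exp_neg_mul [IsFiniteMeasure P] (hm : AEMeasurable S P) (hn : 0 ≤ᵐ[P] S)
    (hs : 0 ≤ s) : Integrable (fun ω => exp (-s * S ω)) P :=
  .of_mem_Icc 0 1 (measurable_exp.comp_aemeasurable (hm.const_mul _)) <|
    hn.mono fun ω (hω : 0 ≤ S ω) => ⟨(exp_pos _).le, exp_le_one_iff.2 (by nlinarith)⟩

lemma laplaceRV_pos [IsProbabilityMeasure P] (hm : AEMeasurable S P) (hn : 0 ≤ᵐ[P] S)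
    (hs : 0 ≤ s) : 0 < laplaceRV P S s :=
  mgf_pos (integrable_exp_neg_mul hm hn hs)

lemma mLaplaceRV_nonneg (hn : 0 ≤ᵐ[P] S) : 0 ≤ mLaplaceRV P S s :=
  integral_nonneg_of_ae <| hn.mono fun _ hω => mul_nonneg hω (exp_pos _).le

lemma mLaplaceRV_le [IsProbabilityMeasure P] (hs : 0 < s) :
    mLaplaceRV P S s ≤ exp (-1) / s := by
  by_cases hint : Integrable (fun ω => S ω * exp (-s * S ω)) P
  · simpa [mLaplaceRV] using integral_mono hint (integrable_const _)
      (mul_exp_neg_mul_le_exp_neg_one_div hs <| S ·)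
  · rw [mLaplaceRV, integral_undef hint]
    positivity

lemma mul_mLaplaceRV_le [IsProbabilityMeasure P] (hn : 0 ≤ᵐ[P] S) {l : ℝ} (hls : l ≤ s)
    (hs : 0 < s) : l * mLaplaceRV P S s ≤ exp (-1) :=
  calc l * mLaplaceRV P S s ≤ s * mLaplaceRV P S s :=
        mul_le_mul_of_nonneg_right hls (mLaplaceRV_nonneg hn)
    _ ≤ exp (-1) := (le_div_iff₀' hs).1 (mLaplaceRV_le hs)

lemma tendsto_mLaplaceRV_atTop [IsProbabilityMeasure P] (hn : 0 ≤ᵐ[P] S) :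
    Tendsto (mLaplaceRV P S) atTop (nhds 0) :=
  squeeze_zero' (.of_forall fun _ => mLaplaceRV_nonneg hn)
    ((eventually_gt_atTop 0).mono fun _ => mLaplaceRV_le)
    (tendsto_const_nhds.div_atTop tendsto_id)

end Laplace

lemma abs_neg_mul_div_mul_sqrt_le {l1 l2 L1 L2 M1 M2 C c : ℝ} (hl1 : 0 < l1) (hl2 : 0 ≤ l2)
    (hL1 : 0 < L1) (hL2 : 0 ≤ L2) (hM1 : 0 ≤ M1) (hM2 : 0 ≤ M2) (hL : L2 ≤ C * L1)
    (hc : 0 < c) (hc1 : c ≤ 1 - 2 * l1 * M1) (hc2 : c ≤ 1 - 2 * l2 * M2) :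
    |-(l1 * l2 * (M1 * L2 + L1 * M2)) /
        ((l1 * L1 + l2 * L2) * sqrt ((1 - 2 * l1 * M1) * (1 - 2 * l2 * M2)))| ≤
      l2 * (C * M1 + M2) / c := by
  have hD : l1 * L1 * c ≤
      (l1 * L1 + l2 * L2) * sqrt ((1 - 2 * l1 * M1) * (1 - 2 * l2 * M2)) :=
    mul_le_mul (by nlinarith) ((le_sqrt' hc).2 (by nlinarith)) hc.le (by positivity)
  have hN : 0 ≤ l1 * l2 * (M1 * L2 + L1 * M2) := by positivity
  have hD_pos : 0 < l1 * L1 * c := by positivity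
  rw [abs_div, abs_neg, abs_of_nonneg hN, abs_of_pos (hD_pos.trans_le hD)]
  calc _ ≤ l1 * l2 * (M1 * L2 + L1 * M2) / (l1 * L1 * c) :=
        div_le_div_of_nonneg_left hN hD_pos hD
    _ ≤ l2 * (C * M1 + M2) / c := by
        rw [div_le_div_iff₀ (by positivity) hc]
        nlinarith [mul_nonneg (mul_nonneg (mul_nonneg (mul_nonneg hl1.le hl2) hc.le) hM1)
          (sub_nonneg.2 hL)]

/-- If `L_{S,2}(s) = O(L_{S,1}(s))` as `s → ∞`, then the correlation coefficient of the
two stationary AoIs tends to `0` as `λ1 → ∞`. -/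
theorem aoiCC_tendsto_zero_lambda1_to_top {Ω : Type*} [MeasurableSpace Ω] (P : Measure Ω)
    [IsProbabilityMeasure P] (S1 S2 : Ω → ℝ) (hS1meas : Measurable S1)
    (hS2meas : Measurable S2) (hS1nn : ∀ ω, 0 ≤ S1 ω) (hS2nn : ∀ ω, 0 ≤ S2 ω)
    (lam2 : ℝ) (hlam2 : 0 < lam2)
    (hO : ∃ C > (0 : ℝ), ∃ s0 : ℝ, ∀ s ≥ s0, laplaceRV P S2 s ≤ C * laplaceRV P S1 s) :
    Tendsto (fun lam1 : ℝ => aoiCC P S1 S2 lam1 lam2) atTop (nhds 0) := by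
  obtain ⟨C, -, s0, hC⟩ := hO
  have hn1 : 0 ≤ᵐ[P] S1 := .of_forall hS1nn
  have hn2 : 0 ≤ᵐ[P] S2 := .of_forall hS2nn
  have hc : 0 < 1 - 2 * exp (-1) := by
    have := (inv_lt_inv₀ (exp_pos 1) two_pos).2 exp_one_gt_two
    rw [exp_neg]
    linarith
  have hs : Tendsto (· + lam2) atTop atTop := tendsto_atTop_add_const_right _ _ tendsto_id
  have hbound : Tendsto (fun l1 => lam2 * (C * mLaplaceRV P S1 (l1 + lam2) +
      mLaplaceRV P S2 (l1 + lam2)) / (1 - 2 * exp (-1))) atTop (nhds 0) := by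
    simpa using ((((tendsto_mLaplaceRV_atTop hn1).comp hs).const_mul C).add
      ((tendsto_mLaplaceRV_atTop hn2).comp hs)).const_mul lam2 |>.div_const _
  refine squeeze_zero_norm' ?_ hbound
  filter_upwards [eventually_gt_atTop 0, eventually_ge_atTop (s0 - lam2)] with l1 hl1 hl1s0
  have hpos : 0 < l1 + lam2 := by linarith
  have hM1 := mul_mLaplaceRV_le hn1 (le_add_of_nonneg_right hlam2.le) hpos
  have hM2 := mul_mLaplaceRV_le hn2 (le_add_of_nonneg_left hl1.le) hpos
  exact (Real.norm_eq_abs _).trans_le <| abs_neg_mul_div_mul_sqrt_le hl1 hlam2.le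
    (laplaceRV_pos hS1meas.aemeasurable hn1 hpos.le)
    (laplaceRV_pos hS2meas.aemeasurable hn2 hpos.le).le
    (mLaplaceRV_nonneg hn1) (mLaplaceRV_nonneg hn2) (hC _ (by linarith)) hc
    (by linarith) (by linarith)
end

section
/- Let λ1, λ2 > 0 and λ = λ1 + λ2. Then (λ/(2·λ1·λ2)) · sqrt((e·λ − 2·λ1)·(e·λ − 2·λ2)) ≥ 2·(e − 1), or equivalently −2·λ1·λ2/(λ·sqrt((e·λ − 2·λ1)·(e·λ − 2·λ2))) ≥ −1/(2·(e − 1)), and equality holds if and only if λ1 = λ2 = λ/2. (Note e·λ − 2·λ_k > 0 automatically since 2·λ_k < 2·λ ≤ e·λ.) -/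
/-!
Write `R = (c(a+b) - 2a)(c(a+b) - 2b) = c(c-2)(a+b)² + 4ab`. For `c ≥ 2` the AM–GM inequality
`4ab ≤ (a+b)²`, applied once inside `R` and once to the factor `a + b`, gives
`R ≥ 4ab(c-1)²` and hence `((a+b)√R)² ≥ 4ab · 4ab(c-1)² = (4(c-1)ab)²`.
Both AM–GM steps are strict unless `a = b`, where the bound is attained. The theorem is the
case `c = e`.
-/

open Real

section

variable {a b c : ℝ}

theorem four_mul_mul_sub_one_sq_le (hc : 2 ≤ c) :
    4 * (a * b) * (c - 1) ^ 2 ≤ (c * (a + b) - 2 * a) * (c * (a + b) - 2 * b) := by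
  have hcc : 0 ≤ c * (c - 2) := mul_nonneg (by linarith) (by linarith)
  linear_combination mul_le_mul_of_nonneg_left (four_mul_le_sq_add a b) hcc

theorem add_self_mul_sqrt_eq (hc : 1 ≤ c) (ha : 0 ≤ a) :
    (a + a) * √((c * (a + a) - 2 * a) * (c * (a + a) - 2 * a)) = 4 * (c - 1) * (a * a) := by
  rw [show c * (a + a) - 2 * a = 2 * (c - 1) * a by ring,
    sqrt_mul_self (mul_nonneg (mul_nonneg zero_le_two (sub_nonneg.2 hc)) ha)]
  ring

theorem four_mul_sub_one_mul_lt_add_mul_sqrt (hc : 2 ≤ c) (ha : 0 < a) (hb : 0 < b)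
    (hab : a ≠ b) :
    4 * (c - 1) * (a * b) < (a + b) * √((c * (a + b) - 2 * a) * (c * (a + b) - 2 * b)) := by
  have hc1 : 0 < c - 1 := by linarith
  have hamgm : 4 * (a * b) < (a + b) ^ 2 := by
    nlinarith [sq_pos_of_ne_zero (sub_ne_zero.mpr hab)]
  have hR := four_mul_mul_sub_one_sq_le (a := a) (b := b) hc
  refine lt_of_pow_lt_pow_left₀ 2 (by positivity) ?_
  rw [mul_pow (a + b), sq_sqrt (le_trans (by positivity) hR)]
  calc (4 * (c - 1) * (a * b)) ^ 2 = 4 * (a * b) * (4 * (a * b) * (c - 1) ^ 2) := by ring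
    _ < (a + b) ^ 2 * ((c * (a + b) - 2 * a) * (c * (a + b) - 2 * b)) :=
      mul_lt_mul hamgm hR (by positivity) (sq_nonneg _)

theorem four_mul_sub_one_mul_le_add_mul_sqrt (hc : 2 ≤ c) (ha : 0 < a) (hb : 0 < b) :
    4 * (c - 1) * (a * b) ≤ (a + b) * √((c * (a + b) - 2 * a) * (c * (a + b) - 2 * b)) := by
  rcases eq_or_ne a b with rfl | hab
  · exact (add_self_mul_sqrt_eq (by linarith) ha.le).ge
  · exact (four_mul_sub_one_mul_lt_add_mul_sqrt hc ha hb hab).le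

theorem add_mul_sqrt_eq_four_mul_sub_one_mul_iff (hc : 2 ≤ c) (ha : 0 < a) (hb : 0 < b) :
    (a + b) * √((c * (a + b) - 2 * a) * (c * (a + b) - 2 * b)) = 4 * (c - 1) * (a * b) ↔
      a = b := by
  constructor
  · intro h
    by_contra hab
    exact (four_mul_sub_one_mul_lt_add_mul_sqrt hc ha hb hab).ne' h
  · rintro rfl
    exact add_self_mul_sqrt_eq (by linarith) ha.le

end

/-- For `λ1, λ2 > 0` with `λ = λ1 + λ2`:
`(λ/(2·λ1·λ2))·sqrt((e·λ−2·λ1)·(e·λ−2·λ2)) ≥ 2·(e−1)`, equivalently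
`−2·λ1·λ2/(λ·sqrt((e·λ−2·λ1)·(e·λ−2·λ2))) ≥ −1/(2·(e−1))`,
with equality if and only if `λ1 = λ2 = λ/2`. -/
theorem deterministic_cc_lower_bound (lam1 lam2 : ℝ) (hlam1 : 0 < lam1)
    (hlam2 : 0 < lam2) :
    (2 * (Real.exp 1 - 1) ≤ ((lam1 + lam2) / (2 * lam1 * lam2)) *
        Real.sqrt ((Real.exp 1 * (lam1 + lam2) - 2 * lam1) *
          (Real.exp 1 * (lam1 + lam2) - 2 * lam2))) ∧
    (-(1 / (2 * (Real.exp 1 - 1))) ≤ -(2 * lam1 * lam2) / ((lam1 + lam2) *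
        Real.sqrt ((Real.exp 1 * (lam1 + lam2) - 2 * lam1) *
          (Real.exp 1 * (lam1 + lam2) - 2 * lam2)))) ∧
    (((lam1 + lam2) / (2 * lam1 * lam2)) *
        Real.sqrt ((Real.exp 1 * (lam1 + lam2) - 2 * lam1) *
          (Real.exp 1 * (lam1 + lam2) - 2 * lam2)) = 2 * (Real.exp 1 - 1) ↔
      lam1 = lam2 ∧ lam1 = (lam1 + lam2) / 2) := by
  have he : 2 ≤ exp 1 := by linarith [add_one_le_exp 1]
  have he1 : 0 < exp 1 - 1 := by linarith
  have hbound := four_mul_sub_one_mul_le_add_mul_sqrt he hlam1 hlam2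
  have hden : 0 < 2 * lam1 * lam2 := by positivity
  have hpos : 0 < (lam1 + lam2) *
      √((exp 1 * (lam1 + lam2) - 2 * lam1) * (exp 1 * (lam1 + lam2) - 2 * lam2)) :=
    lt_of_lt_of_le (by positivity) hbound
  rw [div_mul_eq_mul_div]
  refine ⟨?_, ?_, ?_⟩
  · rw [le_div_iff₀ hden]
    linarith
  · rw [neg_div, neg_le_neg_iff, div_le_div_iff₀ hpos (by linarith)]
    linarith
  · rw [div_eq_iff hden.ne', show 2 * (exp 1 - 1) * (2 * lam1 * lam2)
      = 4 * (exp 1 - 1) * (lam1 * lam2) by ring,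
      add_mul_sqrt_eq_four_mul_sub_one_mul_iff he hlam1 hlam2]
    constructor
    · rintro rfl
      exact ⟨rfl, by ring⟩
    · exact And.left
end

section
/- Let λ1, λ2 > 0 with λ = λ1 + λ2, and let S be any nonnegative random variable with M(λ) = E[S·exp(−λ·S)]. Then CC_S(λ1, λ2) = −2·λ1·λ2·M(λ) / (λ · sqrt((1 − 2·λ1·M(λ))·(1 − 2·λ2·M(λ)))) ≥ −1/(2·(e − 1)) ≈ −0.290988, and equality holds if and only if λ1 = λ2 = λ/2 and S = 1/λ almost surely. -/
/-!
Write `λ = λ₁ + λ₂` and `t = λ·M(λ)`. Pointwise `x·e^{-λx} ≤ 1/(eλ)`, with equality only at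
`x = 1/λ`, so `t ≤ 1/e`, with equality iff `S = 1/λ` almost surely.

After squaring, the bound on the correlation coefficient says that
`g(P) = λ²(1 - 2t) + λ²M²·P - (e - 1)²M²·P²` is nonnegative at `P = 4λ₁λ₂ ∈ (0, λ²]`.
As a concave function of `P`, `g` lies above its chord on `[0, λ²]`; `g(0) = λ²(1 - 2t) > 0` and
`g(λ²) = λ²(1 - e·t)(1 + (e - 2)t) ≥ 0`, so `g(P) = 0` forces `P = λ²` (that is, `λ₁ = λ₂`)
and `e·t = 1`.
-/

open MeasureTheory Filter Real

theorem Real.mul_exp_neg_eq_exp_neg_one_iff {y : ℝ} : y * exp (-y) = exp (-1) ↔ y = 1 := by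
  refine ⟨fun h => ?_, fun h => by rw [h, one_mul]⟩
  by_contra hy
  have hlt : y < exp (y - 1) := by linarith [add_one_lt_exp (sub_ne_zero.mpr hy)]
  have : y * exp (-y) < exp (-1) :=
    calc y * exp (-y) < exp (y - 1) * exp (-y) := by gcongr
      _ = exp (-1) := by rw [← exp_add]; ring_nf
  exact this.ne h

lemma mul_mul_exp_neg_mul_le (l x : ℝ) : l * (x * exp (-l * x)) ≤ exp (-1) := by
  simpa only [mul_assoc, neg_mul] using mul_exp_neg_le_exp_neg_one (l * x)

lemma mul_mul_exp_neg_mul_eq_iff {l : ℝ} (hl : 0 < l) (x : ℝ) :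
    l * (x * exp (-l * x)) = exp (-1) ↔ x = 1 / l := by
  rw [← mul_assoc, neg_mul, mul_exp_neg_eq_exp_neg_one_iff, eq_div_iff hl.ne', mul_comm]

section ServiceTime

variable {Ω : Type*} [MeasurableSpace Ω] (P : Measure Ω) [IsProbabilityMeasure P]
  {S : Ω → ℝ} {l : ℝ}

lemma integrable_mul_exp_neg_mul (hS : Measurable S) (hSnn : ∀ ω, 0 ≤ S ω) (hl : 0 < l) :
    Integrable (fun ω => S ω * exp (-l * S ω)) P := by
  refine .of_bound (by fun_prop) (exp (-1) / l) (Eventually.of_forall fun ω => ?_)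
  rw [norm_of_nonneg (mul_nonneg (hSnn ω) (exp_pos _).le), le_div_iff₀' hl]
  exact mul_mul_exp_neg_mul_le l (S ω)

lemma mul_integral_mul_exp_neg_mul_le (hS : Measurable S) (hSnn : ∀ ω, 0 ≤ S ω) (hl : 0 < l) :
    l * ∫ ω, S ω * exp (-l * S ω) ∂P ≤ exp (-1) := by
  rw [← integral_const_mul]
  calc ∫ ω, l * (S ω * exp (-l * S ω)) ∂P ≤ ∫ _, exp (-1) ∂P :=
        integral_mono ((integrable_mul_exp_neg_mul P hS hSnn hl).const_mul l)
          (integrable_const _) fun ω => mul_mul_exp_neg_mul_le l (S ω)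
    _ = exp (-1) := by simp

lemma mul_integral_mul_exp_neg_mul_eq_iff (hS : Measurable S) (hSnn : ∀ ω, 0 ≤ S ω)
    (hl : 0 < l) :
    l * ∫ ω, S ω * exp (-l * S ω) ∂P = exp (-1) ↔ ∀ᵐ ω ∂P, S ω = 1 / l := by
  have hconst : exp (-1) = ∫ _, exp (-1) ∂P := by simp
  rw [← integral_const_mul, hconst, integral_eq_iff_of_ae_le
    ((integrable_mul_exp_neg_mul P hS hSnn hl).const_mul l) (integrable_const _)
    (Eventually.of_forall fun ω => mul_mul_exp_neg_mul_le l (S ω))]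
  exact eventually_congr (Eventually.of_forall fun ω => mul_mul_exp_neg_mul_eq_iff hl (S ω))

end ServiceTime

section CorrelationBound

variable {E l1 l2 m t : ℝ}

/-- The chord decomposition `L·g(P) = (L - P)·g(0) + P·g(L) + L·(E - 1)²m²·P(L - P)`,
with `L = (l1 + l2)²` and `P = 4·l1·l2`. -/
lemma radicand_sub_sq_decomposition (E l1 l2 m : ℝ) :
    (l1 + l2) ^ 2 * ((l1 + l2) ^ 2 * ((1 - 2 * l1 * m) * (1 - 2 * l2 * m))
      - (4 * (E - 1) * l1 * l2 * m) ^ 2) =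
    (l1 - l2) ^ 2 * ((l1 + l2) ^ 2 * (1 - 2 * ((l1 + l2) * m)))
      + 4 * l1 * l2 * ((l1 + l2) ^ 2 * ((1 - E * ((l1 + l2) * m)) *
          (1 + (E - 2) * ((l1 + l2) * m))))
      + 4 * (E - 1) ^ 2 * m ^ 2 * (l1 + l2) ^ 2 * l1 * l2 * (l1 - l2) ^ 2 := by
  ring

lemma one_sub_two_mul_pos (hE : 2 < E) (ht : E * t ≤ 1) : 0 < 1 - 2 * t := by
  nlinarith

lemma one_add_sub_two_mul_pos (hE : 2 < E) (ht0 : 0 ≤ t) : 0 < 1 + (E - 2) * t := by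
  nlinarith

lemma sq_le_radicand_of_mul_le_one (hE : 2 < E) (hl1 : 0 < l1) (hl2 : 0 < l2) (hm : 0 ≤ m)
    (ht : E * ((l1 + l2) * m) ≤ 1) :
    (4 * (E - 1) * l1 * l2 * m) ^ 2 ≤ (l1 + l2) ^ 2 * ((1 - 2 * l1 * m) * (1 - 2 * l2 * m)) := by
  have ht0 : 0 ≤ (l1 + l2) * m := by positivity
  have h2t := one_sub_two_mul_pos hE ht
  have hEt : 0 ≤ 1 - E * ((l1 + l2) * m) := by linarith
  have hE2t := one_add_sub_two_mul_pos hE ht0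
  have hE1 : 0 ≤ E - 1 := by linarith
  rw [← sub_nonneg, ← mul_nonneg_iff_of_pos_left (by positivity : 0 < (l1 + l2) ^ 2),
    radicand_sub_sq_decomposition]
  positivity

lemma sq_eq_radicand_iff_of_mul_le_one (hE : 2 < E) (hl1 : 0 < l1) (hl2 : 0 < l2) (hm : 0 ≤ m)
    (ht : E * ((l1 + l2) * m) ≤ 1) :
    (4 * (E - 1) * l1 * l2 * m) ^ 2 = (l1 + l2) ^ 2 * ((1 - 2 * l1 * m) * (1 - 2 * l2 * m)) ↔
      l1 = l2 ∧ E * ((l1 + l2) * m) = 1 := by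
  have ht0 : 0 ≤ (l1 + l2) * m := by positivity
  have h2t := one_sub_two_mul_pos hE ht
  have hEt : 0 ≤ 1 - E * ((l1 + l2) * m) := by linarith
  have hE2t := one_add_sub_two_mul_pos hE ht0
  have hdec := radicand_sub_sq_decomposition E l1 l2 m
  constructor
  · intro heq
    rw [← heq, sub_self, mul_zero, eq_comm] at hdec
    obtain ⟨h12, -⟩ := (add_eq_zero_iff_of_nonneg (by positivity) (by positivity)).mp hdec
    obtain ⟨hT1, hT2⟩ := (add_eq_zero_iff_of_nonneg (by positivity) (by positivity)).mp h12
    refine ⟨?_, ?_⟩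
    · simpa [h2t.ne', (add_pos hl1 hl2).ne', sub_eq_zero] using hT1
    · have : 1 - E * ((l1 + l2) * m) = 0 := by
        simpa [hl1.ne', hl2.ne', (add_pos hl1 hl2).ne', hE2t.ne'] using hT2
      linarith
  · rintro ⟨rfl, hEt1⟩
    rw [sub_self, hEt1, sub_self] at hdec
    have hL : (l1 + l1) ^ 2 ≠ 0 := by positivity
    linarith [show (l1 + l1) ^ 2 * ((1 - 2 * l1 * m) * (1 - 2 * l1 * m))
      - (4 * (E - 1) * l1 * l1 * m) ^ 2 = 0 by simpa [hL] using hdec]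

lemma radicand_pos_of_mul_le_one (hE : 2 < E) (hl1 : 0 < l1) (hl2 : 0 < l2) (hm : 0 ≤ m)
    (ht : E * ((l1 + l2) * m) ≤ 1) :
    0 < (l1 + l2) ^ 2 * ((1 - 2 * l1 * m) * (1 - 2 * l2 * m)) := by
  have h2t := one_sub_two_mul_pos hE ht
  have := mul_nonneg hl1.le hm
  have := mul_nonneg hl2.le hm
  refine mul_pos (by positivity) (mul_pos ?_ ?_) <;> nlinarith

lemma div_sqrt_le_one_div_iff {x c q : ℝ} (hx : 0 ≤ x) (hc : 0 < c) (hq : 0 < q) :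
    x / √q ≤ 1 / c ↔ (c * x) ^ 2 ≤ q := by
  rw [div_le_div_iff₀ (sqrt_pos.mpr hq) hc, one_mul, mul_comm, le_sqrt (by positivity) hq.le]

lemma div_sqrt_eq_one_div_iff {x c q : ℝ} (hx : 0 ≤ x) (hc : 0 < c) (hq : 0 < q) :
    x / √q = 1 / c ↔ (c * x) ^ 2 = q := by
  rw [div_eq_div_iff (sqrt_pos.mpr hq).ne' hc.ne', one_mul, mul_comm, eq_comm,
    sqrt_eq_iff_eq_sq hq.le (by positivity), eq_comm]

noncomputable def aoiCorrCoeff (lam1 lam2 M : ℝ) : ℝ :=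
  -(2 * lam1 * lam2 * M) / ((lam1 + lam2) * √((1 - 2 * lam1 * M) * (1 - 2 * lam2 * M)))

lemma aoiCorrCoeff_eq_neg_div_sqrt (hl : 0 ≤ l1 + l2) :
    aoiCorrCoeff l1 l2 m =
      -(2 * l1 * l2 * m / √((l1 + l2) ^ 2 * ((1 - 2 * l1 * m) * (1 - 2 * l2 * m)))) := by
  rw [aoiCorrCoeff, sqrt_mul (sq_nonneg _), sqrt_sq hl, neg_div]

lemma neg_one_div_le_aoiCorrCoeff (hE : 2 < E) (hl1 : 0 < l1) (hl2 : 0 < l2) (hm : 0 ≤ m)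
    (ht : E * ((l1 + l2) * m) ≤ 1) :
    -(1 / (2 * (E - 1))) ≤ aoiCorrCoeff l1 l2 m := by
  rw [aoiCorrCoeff_eq_neg_div_sqrt (add_pos hl1 hl2).le, neg_le_neg_iff,
    div_sqrt_le_one_div_iff (by positivity) (by linarith)
      (radicand_pos_of_mul_le_one hE hl1 hl2 hm ht)]
  convert sq_le_radicand_of_mul_le_one hE hl1 hl2 hm ht using 2
  ring

lemma aoiCorrCoeff_eq_neg_one_div_iff (hE : 2 < E) (hl1 : 0 < l1) (hl2 : 0 < l2) (hm : 0 ≤ m)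
    (ht : E * ((l1 + l2) * m) ≤ 1) :
    aoiCorrCoeff l1 l2 m = -(1 / (2 * (E - 1))) ↔ l1 = l2 ∧ E * ((l1 + l2) * m) = 1 := by
  rw [aoiCorrCoeff_eq_neg_div_sqrt (add_pos hl1 hl2).le, neg_inj,
    div_sqrt_eq_one_div_iff (by positivity) (by linarith)
      (radicand_pos_of_mul_le_one hE hl1 hl2 hm ht),
    ← sq_eq_radicand_iff_of_mul_le_one hE hl1 hl2 hm ht]
  ring_nf

end CorrelationBound

/-- With a common service-time distribution `S` and `λ = λ1 + λ2`, the AoI correlation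
coefficient `CC_S(λ1,λ2) = −2·λ1·λ2·M(λ)/(λ·sqrt((1−2·λ1·M(λ))·(1−2·λ2·M(λ))))`
satisfies `CC_S(λ1,λ2) ≥ −1/(2·(e−1))`, with equality if and only if
`λ1 = λ2 = λ/2` and `S = 1/λ` almost surely, where `M(λ) = E[S·exp(−λ·S)]`. -/
theorem aoiCC_common_service_lower_bound {Ω : Type*} [MeasurableSpace Ω]
    (P : Measure Ω) [IsProbabilityMeasure P] (S : Ω → ℝ) (hSmeas : Measurable S)
    (hSnn : ∀ ω, 0 ≤ S ω) (lam1 lam2 : ℝ) (hlam1 : 0 < lam1) (hlam2 : 0 < lam2) :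
    (-(1 / (2 * (Real.exp 1 - 1))) ≤
      -(2 * lam1 * lam2 * ∫ ω, S ω * Real.exp (-(lam1 + lam2) * S ω) ∂P) /
        ((lam1 + lam2) *
          Real.sqrt ((1 - 2 * lam1 * ∫ ω, S ω * Real.exp (-(lam1 + lam2) * S ω) ∂P) *
            (1 - 2 * lam2 * ∫ ω, S ω * Real.exp (-(lam1 + lam2) * S ω) ∂P)))) ∧
    (-(2 * lam1 * lam2 * ∫ ω, S ω * Real.exp (-(lam1 + lam2) * S ω) ∂P) /
        ((lam1 + lam2) *
          Real.sqrt ((1 - 2 * lam1 * ∫ ω, S ω * Real.exp (-(lam1 + lam2) * S ω) ∂P) *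
            (1 - 2 * lam2 * ∫ ω, S ω * Real.exp (-(lam1 + lam2) * S ω) ∂P))) =
        -(1 / (2 * (Real.exp 1 - 1))) ↔
      (lam1 = lam2 ∧ lam1 = (lam1 + lam2) / 2 ∧
        ∀ᵐ ω ∂P, S ω = 1 / (lam1 + lam2))) := by
  have hl : 0 < lam1 + lam2 := add_pos hlam1 hlam2
  have hE : 2 < exp 1 := lt_trans (by norm_num) exp_one_gt_d9
  have hM0 : 0 ≤ ∫ ω, S ω * exp (-(lam1 + lam2) * S ω) ∂P :=
    integral_nonneg fun ω => mul_nonneg (hSnn ω) (exp_pos _).le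
  have hexp_le {x : ℝ} : x ≤ exp (-1) ↔ exp 1 * x ≤ 1 := by
    rw [exp_neg, ← one_div, le_div_iff₀' (exp_pos 1)]
  have hexp_eq {x : ℝ} : x = exp (-1) ↔ exp 1 * x = 1 := by
    rw [exp_neg, ← one_div, eq_div_iff (exp_pos 1).ne', mul_comm]
  have ht := hexp_le.mp (mul_integral_mul_exp_neg_mul_le P hSmeas hSnn hl)
  refine ⟨neg_one_div_le_aoiCorrCoeff hE hlam1 hlam2 hM0 ht,
    (aoiCorrCoeff_eq_neg_one_div_iff hE hlam1 hlam2 hM0 ht).trans ?_⟩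
  rw [← hexp_eq, mul_integral_mul_exp_neg_mul_eq_iff P hSmeas hSnn hl]
  constructor
  · rintro ⟨h12, hS⟩
    exact ⟨h12, by linarith, hS⟩
  · rintro ⟨h12, -, hS⟩
    exact ⟨h12, hS⟩
end

section
/- Let (τ_n, S_n), n ≥ 0, be an i.i.d. sequence of pairs where each τ_n is exponentially distributed with rate λ > 0 and independent of the nonnegative random variable S_n. Let M = inf{n ≥ 0 : S_n ≤ τ_n} and B = Σ_{i=0}^{M−1} τ_i + S_M. Then M is almost surely finite, and for every s ≥ 0, E[exp(−s·B)] = (s + λ)·L_S(s+λ) / (s + λ·L_S(s+λ)), where L_S(u) = E[exp(−u·S_0)]. Consequently, if T is exponentially distributed with rate λ independent of everything else, E[exp(−s·(T + B))] = λ·L_S(s+λ) / (s + λ·L_S(s+λ)). -/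
/-!
Let `M` be the index of the first service that beats its interarrival time. On `{M < ∞}`,
`exp (-s B) = ∑ₙ (∏_{i<n} e^{-s τᵢ} 1{τᵢ < Sᵢ}) e^{-s Sₙ} 1{Sₙ ≤ τₙ}`, and by independence the
`n`-th term has expectation `aⁿ b` with `a = E[e^{-s τ} 1{τ < S}]` and `b = E[e^{-s S} 1{S ≤ τ}]`.
For `τ ~ Exp(λ)` the tilted law `e^{-s t} Exp(λ)(dt)` is `λ/(s+λ) · Exp(s+λ)(dt)`, which gives
`a = λ/(s+λ) (1 - L_S(s+λ))` and `b = L_S(s+λ)`; the geometric series `b/(1-a)` is the transform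
of `B`. For `s = 0` the same sum is `P(M < ∞) = 1`. An independent `T ~ Exp(λ)` contributes the
factor `λ/(s+λ)`. Working with `ℝ≥0∞`-valued integrands makes exchanging sum and integral free.
-/

open MeasureTheory ProbabilityTheory Filter

open Set Real Finset
open scoped ENNReal

lemma measurable_exponentialPDF (r : ℝ) : Measurable (exponentialPDF r) :=
  (measurable_exponentialPDFReal r).ennreal_ofReal

lemma expMeasure_withDensity_exp_neg_mul {r s : ℝ} (hr : 0 ≤ r) (hsr : 0 < s + r) :
    (expMeasure r).withDensity (fun t => ENNReal.ofReal (exp (-s * t))) =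
      ENNReal.ofReal (r / (s + r)) • expMeasure (s + r) := by
  have hpdf : exponentialPDF r * (fun t => ENNReal.ofReal (exp (-s * t))) =
      ENNReal.ofReal (r / (s + r)) • exponentialPDF (s + r) := by
    funext t
    simp only [exponentialPDF_eq, Pi.mul_apply, Pi.smul_apply, smul_eq_mul]
    split_ifs
    · rw [← ENNReal.ofReal_mul (by positivity), ← ENNReal.ofReal_mul (by positivity)]
      congr 1
      field_simp
      rw [mul_assoc, ← exp_add]
      ring_nf
    · simp
  have hexp : Measurable fun t : ℝ => ENNReal.ofReal (exp (-s * t)) := by fun_prop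
  change (volume.withDensity (exponentialPDF r)).withDensity _ =
    _ • volume.withDensity (exponentialPDF (s + r))
  rw [← withDensity_mul _ (measurable_exponentialPDF r) hexp, hpdf,
    withDensity_smul _ (measurable_exponentialPDF _)]

lemma lintegral_exp_neg_mul_expMeasure {r s : ℝ} (hr : 0 ≤ r) (hsr : 0 < s + r) :
    ∫⁻ t, ENNReal.ofReal (exp (-s * t)) ∂expMeasure r = ENNReal.ofReal (r / (s + r)) := by
  have := isProbabilityMeasure_expMeasure hsr
  rw [← setLIntegral_univ, ← withDensity_apply _ MeasurableSet.univ,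
    expMeasure_withDensity_exp_neg_mul hr hsr]
  simp

lemma expMeasure_Iio {r x : ℝ} (hr : 0 < r) (hx : 0 ≤ x) :
    expMeasure r (Iio x) = ENNReal.ofReal (1 - exp (-(r * x))) := by
  change volume.withDensity (exponentialPDF r) (Iio x) = _
  rw [withDensity_apply _ measurableSet_Iio, setLIntegral_congr Iio_ae_eq_Iic,
    lintegral_exponentialPDF_eq_antiDeriv hr, if_pos hx]

lemma expMeasure_Ici {r x : ℝ} (hr : 0 < r) (hx : 0 ≤ x) :
    expMeasure r (Ici x) = ENNReal.ofReal (exp (-(r * x))) := by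
  have := isProbabilityMeasure_expMeasure hr
  rw [← compl_Iio, prob_compl_eq_one_sub measurableSet_Iio, expMeasure_Iio hr hx,
    ← ENNReal.ofReal_one, ← ENNReal.ofReal_sub _ (sub_nonneg.2 (exp_le_one_iff.2 ?_))]
  · ring_nf
  · have := mul_nonneg hr.le hx
    linarith

lemma lintegral_indicator_Iio_exp_neg_mul_expMeasure {r s x : ℝ} (hr : 0 ≤ r) (hsr : 0 < s + r)
    (hx : 0 ≤ x) :
    ∫⁻ t, (Iio x).indicator (fun t => ENNReal.ofReal (exp (-s * t))) t ∂expMeasure r =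
      ENNReal.ofReal (r / (s + r)) * ENNReal.ofReal (1 - exp (-((s + r) * x))) := by
  rw [lintegral_indicator measurableSet_Iio, ← withDensity_apply _ measurableSet_Iio,
    expMeasure_withDensity_exp_neg_mul hr hsr, Measure.smul_apply, expMeasure_Iio hsr hx,
    smul_eq_mul]

lemma integral_exp_neg_mul_expMeasure {r s : ℝ} (hr : 0 ≤ r) (hsr : 0 < s + r) :
    ∫ t, exp (-s * t) ∂expMeasure r = r / (s + r) := by
  rw [integral_eq_lintegral_of_nonneg_ae (.of_forall fun _ => (exp_pos _).le) (by fun_prop),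
    lintegral_exp_neg_mul_expMeasure hr hsr, ENNReal.toReal_ofReal (by positivity)]

lemma toReal_mul_inv_one_sub_ofReal_div_mul {ℓ : ℝ≥0∞} (hℓ0 : ℓ ≠ 0) (hℓ1 : ℓ ≤ 1) {r s : ℝ}
    (hr : 0 < r) (hs : 0 ≤ s) :
    (ℓ * (1 - ENNReal.ofReal (r / (s + r)) * (1 - ℓ))⁻¹).toReal =
      (s + r) * ℓ.toReal / (s + r * ℓ.toReal) := by
  have hq : ENNReal.ofReal (r / (s + r)) ≤ 1 :=
    ENNReal.ofReal_le_one.2 (div_le_one_of_le₀ (by linarith) (by positivity))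
  have hL : 0 < ℓ.toReal := ENNReal.toReal_pos hℓ0 (ne_top_of_le_ne_top ENNReal.one_ne_top hℓ1)
  rw [ENNReal.toReal_mul, ENNReal.toReal_inv,
    ENNReal.toReal_sub_of_le (mul_le_one' hq tsub_le_self) ENNReal.one_ne_top, ENNReal.toReal_mul,
    ENNReal.toReal_ofReal (by positivity), ENNReal.toReal_sub_of_le hℓ1 ENNReal.one_ne_top,
    ENNReal.toReal_one]
  have hsr : 0 < s + r := by linarith
  have hden : 1 - r / (s + r) * (1 - ℓ.toReal) = (s + r * ℓ.toReal) / (s + r) := by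
    field_simp
    ring
  rw [hden]
  field_simp

section

variable {Ω β : Type*} [MeasurableSpace Ω] {P : Measure Ω}

lemma Measurable.comp_sInf_setOf_mem {γ : Type*} [MeasurableSpace γ] {f : ℕ → Ω → γ}
    (hf : ∀ n, Measurable (f n)) {A : ℕ → Set Ω} (hA : ∀ n, MeasurableSet (A n)) :
    Measurable fun ω => f (sInf {n | ω ∈ A n}) ω := by
  classical
  -- with `p n ω := ω ∈ A n ∨ ∀ k, ω ∉ A k`, `Nat.find` also returns `0 = sInf ∅` off `⋃ n, A n`
  have h : ∀ ω, ∃ n, ω ∈ A n ∨ ∀ k, ω ∉ A k := fun ω => by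
    by_cases hω : ∃ n, ω ∈ A n
    · exact hω.imp fun _ => .inl
    · exact ⟨0, .inr (not_exists.1 hω)⟩
  have hfind : ∀ ω, sInf {n | ω ∈ A n} = Nat.find (h ω) := fun ω => by
    by_cases hω : ∃ n, ω ∈ A n
    · refine le_antisymm (Nat.sInf_le ?_) (Nat.find_min' _ (.inl (Nat.sInf_mem hω)))
      exact (Nat.find_spec (h ω)).resolve_right fun hnone => hnone _ hω.choose_spec
    · rw [(Nat.find_eq_zero (h ω)).2 (.inr (not_exists.1 hω)), Nat.sInf_eq_zero]
      exact .inr (Set.eq_empty_of_forall_notMem (not_exists.1 hω))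
  simp_rw [hfind]
  refine Measurable.find hf (fun n => ?_) h
  convert (hA n).union (.iInter fun k => (hA k).compl)
  ext
  simp

lemma tsum_prod_indicator_compl_mul_indicator {D : Set β} {x : ℕ → β} (hx : ∃ n, x n ∈ D)
    {M : Type*} [CommSemiring M] [TopologicalSpace M] (g h : β → M) :
    ∑' n, (∏ i ∈ range n, Dᶜ.indicator g (x i)) * D.indicator h (x n) =
      (∏ i ∈ range (sInf {n | x n ∈ D}), g (x i)) * h (x (sInf {n | x n ∈ D})) := by
  set m := sInf {n | x n ∈ D}
  have hm : x m ∈ D := Nat.sInf_mem hx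
  have hbefore : ∀ i < m, x i ∉ D := fun i hi => Nat.notMem_of_lt_sInf hi
  rw [tsum_eq_single m fun n hn => ?_]
  · rw [indicator_of_mem hm]
    congr 1
    exact Finset.prod_congr rfl fun i hi => indicator_of_mem (hbefore i (mem_range.1 hi)) g
  · rcases hn.lt_or_gt with hlt | hgt
    · rw [indicator_of_notMem (hbefore n hlt), mul_zero]
    · rw [Finset.prod_eq_zero (mem_range.2 hgt) (indicator_of_notMem (not_not.2 hm) g), zero_mul]

section IID

variable [MeasurableSpace β] {X : ℕ → Ω → β}

lemma lintegral_prod_range_mul_comp_of_iid (hX : iIndepFun X P) (hXm : ∀ n, Measurable (X n))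
    (hid : ∀ n, IdentDistrib (X n) (X 0) P P) {g h : β → ℝ≥0∞} (hg : Measurable g)
    (hh : Measurable h) (n : ℕ) :
    ∫⁻ ω, (∏ i ∈ range n, g (X i ω)) * h (X n ω) ∂P =
      (∫⁻ ω, g (X 0 ω) ∂P) ^ n * ∫⁻ ω, h (X 0 ω) ∂P := by
  set F : ℕ → β → ℝ≥0∞ := fun i => if i = n then h else g
  have hF : ∀ i, Measurable (F i) := fun i => by
    by_cases hi : i = n <;> simp [F, hi, hg, hh]
  calc ∫⁻ ω, (∏ i ∈ range n, g (X i ω)) * h (X n ω) ∂P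
      = ∫⁻ ω, ∏ i ∈ range (n + 1), (F i ∘ X i) ω ∂P := lintegral_congr fun ω => by
        rw [prod_range_succ]
        simp only [F, Function.comp_apply, if_pos]
        congr 1
        exact prod_congr rfl fun i hi => by simp [(mem_range.1 hi).ne]
    _ = ∏ i ∈ range (n + 1), ∫⁻ ω, (F i ∘ X i) ω ∂P :=
        lintegral_prod_eq_prod_lintegral_of_indepFun _ _ (hX.comp F hF) fun i => (hF i).comp (hXm i)
    _ = ∏ i ∈ range (n + 1), ∫⁻ ω, F i (X 0 ω) ∂P :=
        prod_congr rfl fun i _ => ((hid i).comp (hF i)).lintegral_eq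
    _ = (∫⁻ ω, g (X 0 ω) ∂P) ^ n * ∫⁻ ω, h (X 0 ω) ∂P := by
        rw [prod_range_succ, prod_congr rfl fun i hi =>
          show ∫⁻ ω, F i (X 0 ω) ∂P = ∫⁻ ω, g (X 0 ω) ∂P by simp [F, (mem_range.1 hi).ne]]
        simp [F]

lemma lintegral_tsum_prod_indicator_compl_mul_indicator_of_iid (hX : iIndepFun X P)
    (hXm : ∀ n, Measurable (X n)) (hid : ∀ n, IdentDistrib (X n) (X 0) P P) {D : Set β}
    (hD : MeasurableSet D) {g h : β → ℝ≥0∞} (hg : Measurable g) (hh : Measurable h) :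
    ∫⁻ ω, ∑' n, (∏ i ∈ range n, Dᶜ.indicator g (X i ω)) * D.indicator h (X n ω) ∂P =
      (∫⁻ ω, D.indicator h (X 0 ω) ∂P) * (1 - ∫⁻ ω, Dᶜ.indicator g (X 0 ω) ∂P)⁻¹ := by
  have hmeas : ∀ n, Measurable fun ω =>
      (∏ i ∈ range n, Dᶜ.indicator g (X i ω)) * D.indicator h (X n ω) :=
    fun n => (Finset.measurable_prod _ fun i _ => (hg.indicator hD.compl).comp (hXm i)).mul
      ((hh.indicator hD).comp (hXm n))
  rw [lintegral_tsum fun n => (hmeas n).aemeasurable]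
  simp_rw [lintegral_prod_range_mul_comp_of_iid hX hXm hid (hg.indicator hD.compl)
    (hh.indicator hD)]
  rw [ENNReal.tsum_mul_right, ENNReal.tsum_geometric, mul_comm]

lemma ae_exists_mem_of_iid (hX : iIndepFun X P) (hXm : ∀ n, Measurable (X n))
    (hid : ∀ n, IdentDistrib (X n) (X 0) P P) {D : Set β} (hD : MeasurableSet D)
    (hpos : P (X 0 ⁻¹' D) ≠ 0) :
    ∀ᵐ ω ∂P, ∃ n, X n ω ∈ D := by
  have := hX.isProbabilityMeasure
  have hE : MeasurableSet {ω | ∃ n, X n ω ∈ D} :=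
    measurableSet_setOfPred.2 (.exists fun n => measurableSet_setOfPred.1 (hXm n hD))
  have hsum : ∀ ω, ∑' n, (∏ i ∈ range n, Dᶜ.indicator (1 : β → ℝ≥0∞) (X i ω)) *
      D.indicator 1 (X n ω) = {ω | ∃ n, X n ω ∈ D}.indicator 1 ω := fun ω => by
    by_cases hω : ∃ n, X n ω ∈ D
    · rw [tsum_prod_indicator_compl_mul_indicator hω,
        indicator_of_mem (show ω ∈ {ω | ∃ n, X n ω ∈ D} from hω)]
      simp
    · rw [indicator_of_notMem (show ω ∉ {ω | ∃ n, X n ω ∈ D} from hω)]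
      refine (tsum_congr fun n => ?_).trans tsum_zero
      rw [indicator_of_notMem (not_exists.1 hω n), mul_zero]
  -- for `g = h = 1` the first-success series is the indicator of `{∃ n, X n ∈ D}`
  have hprob := lintegral_tsum_prod_indicator_compl_mul_indicator_of_iid hX hXm hid hD
    (g := 1) (h := 1) measurable_const measurable_const
  have hlaw : ∀ s : Set β, MeasurableSet s → ∫⁻ ω, s.indicator 1 (X 0 ω) ∂P = P (X 0 ⁻¹' s) :=
    fun s hs => by
      simp only [← indicator_comp_right]
      exact lintegral_indicator_one (hXm 0 hs)
  rw [lintegral_congr hsum, lintegral_indicator_one hE, hlaw D hD, hlaw _ hD.compl, preimage_compl,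
    prob_compl_eq_one_sub (hXm 0 hD), ENNReal.sub_sub_cancel ENNReal.one_ne_top prob_le_one,
    ENNReal.mul_inv_cancel hpos (measure_ne_top _ _)] at hprob
  rw [ae_iff_measure_eq hE.nullMeasurableSet, hprob, measure_univ]

lemma lintegral_prod_range_sInf_mul_of_iid (hX : iIndepFun X P) (hXm : ∀ n, Measurable (X n))
    (hid : ∀ n, IdentDistrib (X n) (X 0) P P) {D : Set β} (hD : MeasurableSet D)
    (hfin : ∀ᵐ ω ∂P, ∃ n, X n ω ∈ D) {g h : β → ℝ≥0∞} (hg : Measurable g) (hh : Measurable h) :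
    ∫⁻ ω, (∏ i ∈ range (sInf {n | X n ω ∈ D}), g (X i ω)) * h (X (sInf {n | X n ω ∈ D}) ω) ∂P =
      (∫⁻ ω, D.indicator h (X 0 ω) ∂P) * (1 - ∫⁻ ω, Dᶜ.indicator g (X 0 ω) ∂P)⁻¹ := by
  rw [← lintegral_tsum_prod_indicator_compl_mul_indicator_of_iid hX hXm hid hD hg hh]
  refine lintegral_congr_ae (hfin.mono fun ω hω => ?_)
  exact (tsum_prod_indicator_compl_mul_indicator hω g h).symm

end IID

lemma integral_exp_neg_mul_add_of_indepFun {T B : Ω → ℝ} (hT : Measurable T) (hB : Measurable B)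
    {r : ℝ} (hr : 0 ≤ r) (hlaw : P.map T = expMeasure r) (hTB : IndepFun T B P) {s : ℝ}
    (hsr : 0 < s + r) :
    ∫ ω, exp (-s * (T ω + B ω)) ∂P = r / (s + r) * ∫ ω, exp (-s * B ω) ∂P := by
  have hφ : Measurable fun x : ℝ => exp (-s * x) := by fun_prop
  calc ∫ ω, exp (-s * (T ω + B ω)) ∂P = ∫ ω, exp (-s * T ω) * exp (-s * B ω) ∂P := by
        simp_rw [mul_add, exp_add]
    _ = (∫ ω, exp (-s * T ω) ∂P) * ∫ ω, exp (-s * B ω) ∂P :=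
        (hTB.comp hφ hφ).integral_mul_eq_mul_integral (hφ.comp hT).aestronglyMeasurable
          (hφ.comp hB).aestronglyMeasurable
    _ = r / (s + r) * ∫ ω, exp (-s * B ω) ∂P := by
        rw [← integral_map hT.aemeasurable hφ.aestronglyMeasurable, hlaw,
          integral_exp_neg_mul_expMeasure hr hsr]

section ProbabilityMeasure

variable [IsProbabilityMeasure P]

lemma map_eq_expMeasure_of_measureReal_lt {X : Ω → ℝ} (hX : Measurable X) {r : ℝ} (hr : 0 < r)
    (htail : ∀ t, 0 ≤ t → P.real {ω | t < X ω} = exp (-r * t)) :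
    P.map X = expMeasure r := by
  have := isProbabilityMeasure_expMeasure hr
  have := Measure.isProbabilityMeasure_map (μ := P) hX.aemeasurable
  have hcdf : ∀ x, 0 ≤ x → cdf (P.map X) x = 1 - exp (-(r * x)) := by
    intro x hx
    rw [cdf_eq_real, map_measureReal_apply hX measurableSet_Iic, ← neg_mul, ← htail x hx,
      ← probReal_compl_eq_one_sub (measurableSet_lt measurable_const hX)]
    congr 1
    ext ω
    simp
  refine Measure.eq_of_cdf _ _ (StieltjesFunction.ext fun x => ?_)
  rw [cdf_expMeasure_eq hr]
  split_ifs with hx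
  · exact hcdf x hx
  · refine le_antisymm ((monotone_cdf _ (le_of_not_ge hx)).trans ?_) (cdf_nonneg _ _)
    simp [hcdf 0 le_rfl]

lemma lintegral_comp_prodMk_of_indepFun {α β : Type*} [MeasurableSpace α] [MeasurableSpace β]
    {X : Ω → α} {Y : Ω → β} (hXY : IndepFun X Y P) (hX : Measurable X) (hY : Measurable Y)
    {f : α × β → ℝ≥0∞} (hf : Measurable f) :
    ∫⁻ ω, f (X ω, Y ω) ∂P = ∫⁻ ω, ∫⁻ x, f (x, Y ω) ∂(P.map X) ∂P := by
  rw [← lintegral_map hf (hX.prodMk hY),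
    (indepFun_iff_map_prod_eq_prod_map_map hX.aemeasurable hY.aemeasurable).mp hXY,
    lintegral_prod_symm' _ hf, lintegral_map hf.lintegral_prod_left' hY]

lemma ofReal_exp_neg_mul_le_one {c x : ℝ} (hc : 0 ≤ c) (hx : 0 ≤ x) :
    ENNReal.ofReal (exp (-c * x)) ≤ 1 :=
  ENNReal.ofReal_le_one.2 (exp_le_one_iff.2 (by nlinarith))

lemma lintegral_ofReal_exp_ne_zero {f : Ω → ℝ} (hf : Measurable f) :
    ∫⁻ ω, ENNReal.ofReal (exp (f ω)) ∂P ≠ 0 := by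
  rw [Ne, lintegral_eq_zero_iff (by fun_prop)]
  intro h
  obtain ⟨ω, hω⟩ := h.exists
  exact (ENNReal.ofReal_pos.2 (exp_pos (f ω))).ne' hω

lemma lintegral_ofReal_exp_neg_mul_le_one {c : ℝ} (hc : 0 ≤ c) {S : Ω → ℝ} (hS0 : ∀ ω, 0 ≤ S ω) :
    ∫⁻ ω, ENNReal.ofReal (exp (-c * S ω)) ∂P ≤ 1 :=
  (lintegral_mono fun ω => ofReal_exp_neg_mul_le_one hc (hS0 ω)).trans_eq (by simp)

section ExponentialRace

variable {τ S : Ω → ℝ} {r : ℝ}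

lemma lintegral_indicator_le_exp_neg_mul (hr : 0 < r) (hτ : Measurable τ) (hS : Measurable S)
    (hlaw : P.map τ = expMeasure r) (hτS : IndepFun τ S P) (hS0 : ∀ ω, 0 ≤ S ω) (s : ℝ) :
    ∫⁻ ω, {p : ℝ × ℝ | p.2 ≤ p.1}.indicator (fun p => ENNReal.ofReal (exp (-s * p.2)))
      (τ ω, S ω) ∂P = ∫⁻ ω, ENNReal.ofReal (exp (-(s + r) * S ω)) ∂P := by
  rw [lintegral_comp_prodMk_of_indepFun hτS hτ hS (by measurability), hlaw]
  refine lintegral_congr fun ω => ?_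
  have hind : (fun t => {p : ℝ × ℝ | p.2 ≤ p.1}.indicator
      (fun p => ENNReal.ofReal (exp (-s * p.2))) (t, S ω)) =
      (Ici (S ω)).indicator fun _ => ENNReal.ofReal (exp (-s * S ω)) := by
    ext t
    simp [indicator_apply]
  rw [hind, lintegral_indicator_const measurableSet_Ici, expMeasure_Ici hr (hS0 ω),
    ← ENNReal.ofReal_mul (exp_pos _).le, ← exp_add]
  ring_nf

lemma lintegral_indicator_lt_exp_neg_mul (hr : 0 < r) (hτ : Measurable τ) (hS : Measurable S)
    (hlaw : P.map τ = expMeasure r) (hτS : IndepFun τ S P) (hS0 : ∀ ω, 0 ≤ S ω) {s : ℝ}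
    (hsr : 0 < s + r) :
    ∫⁻ ω, {p : ℝ × ℝ | p.2 ≤ p.1}ᶜ.indicator (fun p => ENNReal.ofReal (exp (-s * p.1)))
      (τ ω, S ω) ∂P =
      ENNReal.ofReal (r / (s + r)) * (1 - ∫⁻ ω, ENNReal.ofReal (exp (-(s + r) * S ω)) ∂P) := by
  rw [lintegral_comp_prodMk_of_indepFun hτS hτ hS (by measurability), hlaw]
  have hinner : ∀ ω, ∫⁻ t, {p : ℝ × ℝ | p.2 ≤ p.1}ᶜ.indicator
      (fun p => ENNReal.ofReal (exp (-s * p.1))) (t, S ω) ∂expMeasure r =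
      ENNReal.ofReal (r / (s + r)) * (1 - ENNReal.ofReal (exp (-(s + r) * S ω))) := by
    intro ω
    have hind : (fun t => {p : ℝ × ℝ | p.2 ≤ p.1}ᶜ.indicator
        (fun p => ENNReal.ofReal (exp (-s * p.1))) (t, S ω)) =
        (Iio (S ω)).indicator fun t => ENNReal.ofReal (exp (-s * t)) := by
      ext t
      simp [indicator_apply]
    rw [hind, lintegral_indicator_Iio_exp_neg_mul_expMeasure hr.le hsr (hS0 ω),
      ENNReal.ofReal_sub _ (exp_pos _).le, ENNReal.ofReal_one, neg_mul]
  simp_rw [hinner]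
  rw [lintegral_const_mul _ (by fun_prop), lintegral_sub (by fun_prop)
    (ne_top_of_le_ne_top ENNReal.one_ne_top (lintegral_ofReal_exp_neg_mul_le_one hsr.le hS0))
    (.of_forall fun ω => ofReal_exp_neg_mul_le_one hsr.le (hS0 ω)), lintegral_one, measure_univ]

lemma measure_le_ne_zero (hr : 0 < r) (hτ : Measurable τ) (hS : Measurable S)
    (hlaw : P.map τ = expMeasure r) (hτS : IndepFun τ S P) (hS0 : ∀ ω, 0 ≤ S ω) :
    P {ω | S ω ≤ τ ω} ≠ 0 := by
  have h := lintegral_indicator_le_exp_neg_mul hr hτ hS hlaw hτS hS0 0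
  simp only [neg_zero, zero_mul, exp_zero, ENNReal.ofReal_one, zero_add] at h
  rw [← lintegral_indicator_one (measurableSet_le hS hτ)]
  change ∫⁻ ω, {p : ℝ × ℝ | p.2 ≤ p.1}.indicator (fun _ => 1) (τ ω, S ω) ∂P ≠ 0
  rw [h]
  exact lintegral_ofReal_exp_ne_zero (by fun_prop)

end ExponentialRace

section BusyPeriod

variable {τ S : ℕ → Ω → ℝ}

lemma measurable_busyPeriod (hτ : ∀ n, Measurable (τ n)) (hS : ∀ n, Measurable (S n))
    {M : Ω → ℕ} (hM : ∀ ω, M ω = sInf {n | S n ω ≤ τ n ω})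
    {B : Ω → ℝ} (hB : ∀ ω, B ω = (∑ i ∈ range (M ω), τ i ω) + S (M ω) ω) : Measurable B := by
  have hB' : B = fun ω => (fun n ω => ∑ i ∈ range n, τ i ω + S n ω)
      (sInf {n | ω ∈ {ω | S n ω ≤ τ n ω}}) ω := funext fun ω => by rw [hB, hM]; rfl
  rw [hB']
  exact Measurable.comp_sInf_setOf_mem
    (fun n => (Finset.measurable_sum _ fun i _ => hτ i).add (hS n))
    fun n => measurableSet_le (hS n) (hτ n)

lemma integral_exp_neg_mul_busyPeriod (hτ : ∀ n, Measurable (τ n)) (hS : ∀ n, Measurable (S n))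
    (hS0 : ∀ n ω, 0 ≤ S n ω) {r : ℝ} (hr : 0 < r) (hlaw : P.map (τ 0) = expMeasure r)
    (hτS : IndepFun (τ 0) (S 0) P) (hindep : iIndepFun (fun n ω => (τ n ω, S n ω)) P)
    (hident : ∀ n, IdentDistrib (fun ω => (τ n ω, S n ω)) (fun ω => (τ 0 ω, S 0 ω)) P P)
    (hfin : ∀ᵐ ω ∂P, ∃ n, S n ω ≤ τ n ω) {M : Ω → ℕ} (hM : ∀ ω, M ω = sInf {n | S n ω ≤ τ n ω})
    {B : Ω → ℝ} (hB : ∀ ω, B ω = (∑ i ∈ range (M ω), τ i ω) + S (M ω) ω) {s : ℝ} (hs : 0 ≤ s) :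
    ∫ ω, exp (-s * B ω) ∂P = (s + r) * (∫ ω, exp (-(s + r) * S 0 ω) ∂P) /
      (s + r * ∫ ω, exp (-(s + r) * S 0 ω) ∂P) := by
  have hsr : 0 < s + r := by linarith
  have hofReal : ∀ ω, ENNReal.ofReal (exp (-s * B ω)) =
      (∏ i ∈ range (M ω), ENNReal.ofReal (exp (-s * τ i ω))) *
        ENNReal.ofReal (exp (-s * S (M ω) ω)) := fun ω => by
    rw [hB ω, mul_add, exp_add, ENNReal.ofReal_mul (exp_pos _).le, mul_sum, exp_sum,
      ENNReal.ofReal_prod_of_nonneg fun i _ => (exp_pos _).le]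
  have hBm := measurable_busyPeriod hτ hS hM hB
  rw [integral_eq_lintegral_of_nonneg_ae (.of_forall fun _ => (exp_pos _).le) (by fun_prop),
    integral_eq_lintegral_of_nonneg_ae (.of_forall fun _ => (exp_pos _).le) (by fun_prop),
    lintegral_congr hofReal]
  have hfirst := lintegral_prod_range_sInf_mul_of_iid (X := fun n ω => (τ n ω, S n ω)) hindep
    (fun n => (hτ n).prodMk (hS n)) hident (measurableSet_le measurable_snd measurable_fst) hfin
    (g := fun p => ENNReal.ofReal (exp (-s * p.1))) (h := fun p => ENNReal.ofReal (exp (-s * p.2)))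
    (by fun_prop) (by fun_prop)
  rw [lintegral_indicator_le_exp_neg_mul hr (hτ 0) (hS 0) hlaw hτS (hS0 0),
    lintegral_indicator_lt_exp_neg_mul hr (hτ 0) (hS 0) hlaw hτS (hS0 0) hsr] at hfirst
  simp only [mem_ofPred_eq, ← hM] at hfirst
  rw [hfirst]
  exact toReal_mul_inv_one_sub_ofReal_div_mul (lintegral_ofReal_exp_ne_zero (by fun_prop))
    (lintegral_ofReal_exp_neg_mul_le_one hsr.le (hS0 0)) hr hs

end BusyPeriod

end ProbabilityMeasure

end

/-- Let `(τ_n, S_n)` be an i.i.d. sequence of pairs, where each `τ_n` is exponentially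
distributed with rate `λ > 0` and independent of the nonnegative `S_n`.  With
`M = inf {n | S_n ≤ τ_n}` and `B = Σ_{i<M} τ_i + S_M`:  `M` is a.s. finite and, for every
`s ≥ 0`, `E[exp(−s·B)] = (s+λ)·L_S(s+λ)/(s + λ·L_S(s+λ))` where `L_S(u) = E[exp(−u·S_0)]`.
Consequently, for `T` exponential of rate `λ` independent of `B`,
`E[exp(−s·(T+B))] = λ·L_S(s+λ)/(s + λ·L_S(s+λ))`. -/
theorem busy_period_transform {Ω : Type*} [MeasurableSpace Ω] (P : Measure Ω)
    [IsProbabilityMeasure P] (τ S : ℕ → Ω → ℝ)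
    (hτmeas : ∀ n, Measurable (τ n)) (hSmeas : ∀ n, Measurable (S n))
    (hSnn : ∀ n ω, 0 ≤ S n ω) (lam : ℝ) (hlam : 0 < lam)
    (hτexp : ∀ n, ∀ t : ℝ, 0 ≤ t → (P {ω | t < τ n ω}).toReal = Real.exp (-lam * t))
    (hpairindep : ∀ n, IndepFun (τ n) (S n) P)
    (hindep : iIndepFun
      (fun n ω => (τ n ω, S n ω)) P)
    (hident : ∀ n, IdentDistrib (fun ω => (τ n ω, S n ω)) (fun ω => (τ 0 ω, S 0 ω)) P P)
    (M : Ω → ℕ) (hM : ∀ ω, M ω = sInf {n | S n ω ≤ τ n ω})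
    (B : Ω → ℝ) (hB : ∀ ω, B ω = (∑ i ∈ Finset.range (M ω), τ i ω) + S (M ω) ω)
    (T : Ω → ℝ) (hTmeas : Measurable T)
    (hTexp : ∀ t : ℝ, 0 ≤ t → (P {ω | t < T ω}).toReal = Real.exp (-lam * t))
    (hTindep : IndepFun T B P) :
    (∀ᵐ ω ∂P, {n | S n ω ≤ τ n ω}.Nonempty) ∧
    (∀ s : ℝ, 0 ≤ s →
      ∫ ω, Real.exp (-s * B ω) ∂P =
        (s + lam) * (∫ ω, Real.exp (-(s + lam) * S 0 ω) ∂P) /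
          (s + lam * ∫ ω, Real.exp (-(s + lam) * S 0 ω) ∂P)) ∧
    (∀ s : ℝ, 0 ≤ s →
      ∫ ω, Real.exp (-s * (T ω + B ω)) ∂P =
        lam * (∫ ω, Real.exp (-(s + lam) * S 0 ω) ∂P) /
          (s + lam * ∫ ω, Real.exp (-(s + lam) * S 0 ω) ∂P)) := by
  have hτlaw : P.map (τ 0) = expMeasure lam :=
    map_eq_expMeasure_of_measureReal_lt (hτmeas 0) hlam (hτexp 0)
  have hfin : ∀ᵐ ω ∂P, ∃ n, S n ω ≤ τ n ω :=
    ae_exists_mem_of_iid (X := fun n ω => (τ n ω, S n ω)) (D := {p : ℝ × ℝ | p.2 ≤ p.1})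
      hindep (fun n => (hτmeas n).prodMk (hSmeas n)) hident
      (measurableSet_le measurable_snd measurable_fst)
      (measure_le_ne_zero hlam (hτmeas 0) (hSmeas 0) hτlaw (hpairindep 0) (hSnn 0))
  have hBtransform := fun s (hs : 0 ≤ s) => integral_exp_neg_mul_busyPeriod hτmeas hSmeas hSnn
    hlam hτlaw (hpairindep 0) hindep hident hfin hM hB hs
  refine ⟨hfin, hBtransform, fun s hs => ?_⟩
  have hsl : 0 < s + lam := by linarith
  rw [integral_exp_neg_mul_add_of_indepFun hTmeas (measurable_busyPeriod hτmeas hSmeas hM hB)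
    hlam.le (map_eq_expMeasure_of_measureReal_lt hTmeas hlam hTexp) hTindep hsl, hBtransform s hs]
  field_simp
end
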